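/- Let γ be a nonempty word over the alphabet {L, M, R} and let t ≥ 0 be an integer. If there exists a word δ such that (γγ̄)^t γ γ̄ γ (γ̄γ)^t = δδ̄, then γ = M^{|γ|} (every letter of γ is M). -/
import Mathlib

/-- The three-letter alphabet {L, M, R}. -/
inductive Letter : Type
  | L | M | R
deriving DecidableEq, Repr

/-- Complementation on letters: R̄ = L, L̄ = R, M̄ = M. -/
def Letter.bar : Letter → Letter
  | .L => .R
  | .M => .M
  | .R => .L

/-- Complement of a word (letterwise). -/
def comp (w : List Letter) : List Letter := w.map Letter.bar

/-- k-fold concatenation of a word with itself. -/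
def npow (w : List Letter) : ℕ → List Letter
  | 0 => []
  | n + 1 => w ++ npow w n

lemma npow_length (w : List Letter) (k : ℕ) : (npow w k).length = k * w.length := by
  induction k with
  | zero => simp [npow]
  | succ k ih => simp [npow, ih]; ring

lemma npow_succ (w : List Letter) (k : ℕ) : npow w (k + 1) = w ++ npow w k := rfl

lemma npow_succ' (w : List Letter) (k : ℕ) : npow w (k + 1) = npow w k ++ w := by
  induction k with
  | zero => simp [npow]
  | succ k ih => rw [npow_succ w (k + 1), ih, ← List.append_assoc, ← npow_succ, ih]

lemma npowL_add (w : List Letter) (a b : ℕ) : npow w (a + b) = npow w a ++ npow w b := by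
  induction a with
  | zero => simp [npow]
  | succ a ih => rw [Nat.succ_add, npow, npow, ih, List.append_assoc]

lemma npow_getElem? (w : List Letter) (k i : ℕ) (h : i < k * w.length) :
    (npow w k)[i]? = w[i % w.length]? := by
  induction k generalizing i with
  | zero => omega
  | succ k ih =>
    rw [npow]
    rcases lt_or_ge i w.length with h1 | h1
    · rw [List.getElem?_append_left h1, Nat.mod_eq_of_lt h1]
    · have hkm : (k + 1) * w.length = k * w.length + w.length := Nat.succ_mul k w.length
      rw [List.getElem?_append_right h1, ih _ (by omega),
        Nat.mod_eq_sub_mod h1]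

lemma npow_swap (w v : List Letter) (k : ℕ) :
    w ++ npow (v ++ w) k = npow (w ++ v) k ++ w := by
  induction k with
  | zero => simp [npow]
  | succ k ih =>
    rw [npow, npow]
    simp only [← List.append_assoc]
    rw [List.append_assoc (w ++ v), ih, ← List.append_assoc]

lemma bar_injective : Function.Injective Letter.bar := by
  intro a b hab
  cases a <;> cases b <;> simp_all [Letter.bar]

theorem stmt_13 (γ : List Letter) (hγ : γ ≠ []) (t : ℕ)
    (h : ∃ δ : List Letter,
      npow (γ ++ comp γ) t ++ γ ++ comp γ ++ γ ++ npow (comp γ ++ γ) t = δ ++ comp δ) :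
    γ = List.replicate γ.length Letter.M := by
  obtain ⟨δ, h⟩ := h
  set n := γ.length with hn
  have hn0 : 0 < n := List.length_pos_iff.mpr hγ
  set m := δ.length with hm
  set K := t * n with hK
  -- length equation
  have hlen : 4 * K + 3 * n = 2 * m := by
    have hl := congrArg List.length h
    simp only [List.length_append, npow_length, comp, List.length_map, ← hn, ← hm] at hl
    have h2 : t * (n + n) = 2 * K := by rw [hK]; ring
    omega
  -- n is even
  obtain ⟨s, hs⟩ : ∃ s, n = 2 * s := ⟨n / 2, by omega⟩
  have hs0 : 0 < s := by omega
  have hm' : m = 2 * K + 3 * s := by omega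
  -- restructure the word: appending comp γ gives a pure power
  have hrest : δ ++ comp δ ++ comp γ = npow (γ ++ comp γ) (t + 1 + (t + 1)) := by
    rw [← h, npowL_add, npow_succ']
    rw [List.append_assoc _ γ (npow (comp γ ++ γ) t), npow_swap]
    simp [List.append_assoc]
  have hulen : (γ ++ comp γ).length = n + n := by simp [comp, ← hn]
  -- periodicity of δ ++ comp δ
  have hG : ∀ i, i < 2 * m → (δ ++ comp δ)[i]? = (γ ++ comp γ)[i % (n + n)]? := by
    intro i hi
    have hilen : i < (δ ++ comp δ).length := by
      simp only [List.length_append, comp, List.length_map, ← hm]; omega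
    have h2K : (t + 1 + (t + 1)) * (n + n) = 4 * K + 4 * n := by rw [hK]; ring
    rw [← List.getElem?_append_left hilen (l₂ := comp γ), hrest,
      npow_getElem? _ _ _ (by rw [hulen, h2K]; omega), hulen]
  -- complementarity at shift m
  have hD : ∀ i, i < m → (δ ++ comp δ)[m + i]? = ((δ ++ comp δ)[i]?).map Letter.bar := by
    intro i hi
    rw [List.getElem?_append_right (by omega), List.getElem?_append_left (by omega)]
    simp only [← hm, comp, List.getElem?_map]
    congr 1
    congr 1
    omega
  -- the two letter relations
  have hu1 : ∀ j, j < n → (γ ++ comp γ)[j]? = γ[j]? := by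
    intro j hj
    rw [List.getElem?_append_left (by omega)]
  have hu2 : ∀ j, n ≤ j → (γ ++ comp γ)[j]? = (γ[j - n]?).map Letter.bar := by
    intro j hj
    rw [List.getElem?_append_right (by rw [← hn]; omega)]
    simp [comp, ← hn]
  have key : ∀ r, r < s → γ[r]? = some Letter.M ∧ γ[s + r]? = some Letter.M := by
    intro r hr
    -- step 1 : γ[s+r] = γ[r]
    have e1 := hD r (by omega)
    rw [hG r (by omega), hG (m + r) (by omega)] at e1
    have mod1 : (m + r) % (n + n) = 3 * s + r := by
      have hrw : m + r = (3 * s + r) + t * (n + n) := by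
        have h2 : t * (n + n) = 2 * K := by rw [hK]; ring
        omega
      rw [hrw, Nat.add_mul_mod_self_right, Nat.mod_eq_of_lt (by omega)]
    have mod2 : r % (n + n) = r := Nat.mod_eq_of_lt (by omega)
    rw [mod1, mod2, hu1 r (by omega), hu2 (3 * s + r) (by omega)] at e1
    have hsub : 3 * s + r - n = s + r := by omega
    rw [hsub] at e1
    have step1 : γ[s + r]? = γ[r]? := Option.map_injective bar_injective e1
    -- step 2 : γ[r] = bar γ[s+r]
    have e2 := hD (s + r) (by omega)
    rw [hG (s + r) (by omega), hG (m + (s + r)) (by omega)] at e2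
    have mod3 : (m + (s + r)) % (n + n) = r := by
      have hrw : m + (s + r) = r + (t + 1) * (n + n) := by
        have h2 : (t + 1) * (n + n) = 2 * K + (n + n) := by rw [hK]; ring
        omega
      rw [hrw, Nat.add_mul_mod_self_right, Nat.mod_eq_of_lt (by omega)]
    have mod4 : (s + r) % (n + n) = s + r := Nat.mod_eq_of_lt (by omega)
    rw [mod3, mod4, hu1 r (by omega), hu1 (s + r) (by omega)] at e2
    rw [step1] at e2
    -- now e2 : γ[r]? = (γ[r]?).map bar
    have hsome : γ[r]? = some (γ[r]'(by omega)) := List.getElem?_eq_getElem (by omega)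
    rw [hsome] at e2
    simp only [Option.map_some] at e2
    have hM : γ[r]'(by omega) = Letter.M := by
      have := Option.some.inj e2
      cases hx : γ[r]'(by omega) <;> rw [hx] at this <;> first | rfl | simp [Letter.bar] at this
    constructor
    · rw [hsome, hM]
    · rw [step1, hsome, hM]
  -- conclude
  apply List.ext_getElem?
  intro i
  rcases lt_or_ge i n with hi | hi
  · rw [List.getElem?_replicate, if_pos (by omega)]
    rcases lt_or_ge i s with his | his
    · exact (key i his).1
    · have : i = s + (i - s) := by omega
      rw [this]
      exact (key (i - s) (by omega)).2
  · rw [List.getElem?_eq_none (by omega), List.getElem?_eq_none (by simp; omega)]
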